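/- Let f : ℝ → ℝ be continuous. If f has no periodic point of least period 2, then every periodic point of f is a fixed point. -/
import Mathlib

open Set Function

/-- Conjugation by negation commutes with iteration. -/
private lemma conj_iter (f : ℝ → ℝ) (k : ℕ) (t : ℝ) :
    (fun s => -f (-s))^[k] t = - f^[k] (-t) := by
  induction k generalizing t with
  | zero => simp
  | succ j ih =>
    rw [Function.iterate_succ_apply, Function.iterate_succ_apply]
    show (fun s => -f (-s))^[j] (-f (-t)) = - f^[j] (f (-t))
    rw [ih, neg_neg]

/-- Key lemma: if every `k`-periodic point is fixed, `m₀ ≤ q`, `m₀` moves up under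
`f^[k]`, `q` is not `k`-periodic and `q` moves up under `f`, then `q` moves up under
`f^[k]`. -/
private lemma key (f : ℝ → ℝ) (hf : Continuous f) (k : ℕ)
    (IHk : ∀ y, f^[k] y = y → f y = y)
    (m₀ q : ℝ) (hmq : m₀ ≤ q) (hm : m₀ < f^[k] m₀)
    (hqk : f^[k] q ≠ q) (hup : q < f q) : q < f^[k] q := by
  by_contra hcon
  have hflt : f^[k] q < q := lt_of_le_of_ne (not_lt.mp hcon) hqk
  have hfk : Continuous (f^[k]) := hf.iterate k
  have hFc : Continuous fun t : ℝ => f^[k] t - t := hfk.sub continuous_id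
  have hGc : Continuous fun t : ℝ => f t - t := hf.sub continuous_id
  by_cases hB : ∃ s, s ≤ q ∧ f s = s
  · -- there is a fixed point below q
    obtain ⟨s₀, hs₀q, hs₀⟩ := hB
    have hSqc : IsClosed ({s : ℝ | f s = s} ∩ Iic q) :=
      (isClosed_eq hf continuous_id).inter isClosed_Iic
    have hSqne : ({s : ℝ | f s = s} ∩ Iic q).Nonempty := ⟨s₀, hs₀, hs₀q⟩
    have hSqbdd : BddAbove ({s : ℝ | f s = s} ∩ Iic q) := ⟨q, fun s hs => hs.2⟩
    set γ := sSup ({s : ℝ | f s = s} ∩ Iic q) with hγdef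
    have hγmem : γ ∈ ({s : ℝ | f s = s} ∩ Iic q) := hSqc.csSup_mem hSqne hSqbdd
    have hγfix : f γ = γ := hγmem.1
    have hγq : γ < q := hγmem.2.lt_of_ne (fun h => hup.ne' (h ▸ hγfix))
    have hfree : ∀ s, γ < s → s ≤ q → f s ≠ s := by
      intro s h1 h2 hs
      exact absurd (le_csSup hSqbdd ⟨hs, h2⟩) (not_le.mpr h1)
    by_cases hC : ∃ s, q ≤ s ∧ f s = s
    · -- B1 : there is also a fixed point above q (a "ceiling")
      obtain ⟨s₁, hs₁q, hs₁⟩ := hC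
      have hTqc : IsClosed ({s : ℝ | f s = s} ∩ Ici q) :=
        (isClosed_eq hf continuous_id).inter isClosed_Ici
      have hTqne : ({s : ℝ | f s = s} ∩ Ici q).Nonempty := ⟨s₁, hs₁, hs₁q⟩
      have hTqbdd : BddBelow ({s : ℝ | f s = s} ∩ Ici q) := ⟨q, fun s hs => hs.2⟩
      set c := sInf ({s : ℝ | f s = s} ∩ Ici q) with hcdef
      have hcmem : c ∈ ({s : ℝ | f s = s} ∩ Ici q) := hTqc.csInf_mem hTqne hTqbdd
      have hqc : q < c := hcmem.2.lt_of_ne (fun h => hup.ne' (by rw [h]; exact hcmem.1))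
      have hfree2 : ∀ s, γ < s → s < c → f s ≠ s := by
        intro s h1 h2 hs
        rcases le_or_gt s q with h | h
        · exact hfree s h1 h hs
        · exact absurd (csInf_le hTqbdd ⟨hs, h.le⟩) (not_le.mpr h2)
      have hgt : ∀ s, γ < s → s < c → s < f s := by
        intro s h1 h2
        rcases lt_trichotomy s (f s) with h | h | h
        · exact h
        · exact absurd h.symm (hfree2 s h1 h2)
        · exfalso
          rcases lt_trichotomy s q with hsq | hsq | hsq
          · obtain ⟨w, hwmem, hweq⟩ := intermediate_value_Icc hsq.le hGc.continuousOn
              (show (0:ℝ) ∈ Icc (f s - s) (f q - q) from ⟨by linarith, by linarith⟩)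
            exact hfree w (lt_of_lt_of_le h1 hwmem.1) hwmem.2 (sub_eq_zero.mp hweq)
          · exact absurd (hsq ▸ h) (not_lt.mpr hup.le)
          · obtain ⟨w, hwmem, hweq⟩ := intermediate_value_Icc' hsq.le hGc.continuousOn
              (show (0:ℝ) ∈ Icc (f s - s) (f q - q) from ⟨by linarith, by linarith⟩)
            exact hfree2 w (lt_of_lt_of_le hγq hwmem.1) (lt_of_le_of_lt hwmem.2 h2)
              (sub_eq_zero.mp hweq)
      have hUopen : IsOpen (⋂ i ∈ Finset.range (k+1), (f^[i]) ⁻¹' (Iio c)) :=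
        isOpen_biInter_finset (fun i _ => isOpen_Iio.preimage (hf.iterate i))
      have hγU : γ ∈ ⋂ i ∈ Finset.range (k+1), (f^[i]) ⁻¹' (Iio c) := by
        refine Set.mem_iInter₂.mpr fun i _ => ?_
        simp only [Set.mem_preimage, Set.mem_Iio, Function.iterate_fixed hγfix]
        exact lt_trans hγq hqc
      obtain ⟨ε, εpos, hball⟩ := Metric.isOpen_iff.mp hUopen γ hγU
      set t := γ + min (ε/2) ((q - γ)/2) with htdef
      have hδpos : 0 < min (ε/2) ((q - γ)/2) := lt_min (by linarith) (by linarith)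
      have htγ : γ < t := by rw [htdef]; linarith
      have htq : t < q := by
        have h5 : min (ε/2) ((q - γ)/2) ≤ (q - γ)/2 := min_le_right _ _
        rw [htdef]; linarith
      have htU : t ∈ ⋂ i ∈ Finset.range (k+1), (f^[i]) ⁻¹' (Iio c) := by
        apply hball
        rw [Metric.mem_ball, Real.dist_eq, htdef]
        have h5 : min (ε/2) ((q - γ)/2) ≤ ε/2 := min_le_left _ _
        rw [abs_of_pos (by linarith)]
        linarith
      have hcap : ∀ i, i ≤ k → f^[i] t < c := by
        intro i hi
        exact Set.mem_iInter₂.mp htU i (Finset.mem_range.mpr (Nat.lt_succ_of_le hi))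
      have chain : ∀ i, i ≤ k → γ < f^[i] t ∧ t ≤ f^[i] t := by
        intro i
        induction i with
        | zero =>
          intro _
          simp only [Function.iterate_zero_apply]
          exact ⟨htγ, le_refl t⟩
        | succ j ih =>
          intro hjk
          obtain ⟨h1, h2⟩ := ih (Nat.le_of_succ_le hjk)
          have h3 : f^[j] t < c := hcap j (Nat.le_of_succ_le hjk)
          have h4 := hgt (f^[j] t) h1 h3
          rw [Function.iterate_succ_apply']
          exact ⟨lt_trans h1 h4, le_trans h2 h4.le⟩
      have hfkt : t ≤ f^[k] t := (chain k le_rfl).2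
      obtain ⟨w, hwmem, hweq⟩ := intermediate_value_Icc' htq.le hFc.continuousOn
        (show (0:ℝ) ∈ Icc (f^[k] q - q) (f^[k] t - t) from ⟨by linarith, by linarith⟩)
      exact hfree w (lt_of_lt_of_le htγ hwmem.1) hwmem.2 (IHk w (sub_eq_zero.mp hweq))
    · -- B2 : no fixed point above q
      push_neg at hC
      have hfree3 : ∀ s, γ < s → f s ≠ s := by
        intro s h1 hs
        rcases le_or_gt s q with h | h
        · exact hfree s h1 h hs
        · exact hC s h.le hs
      have hgt3 : ∀ s, γ < s → s < f s := by
        intro s h1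
        rcases lt_trichotomy s (f s) with h | h | h
        · exact h
        · exact absurd h.symm (hfree3 s h1)
        · exfalso
          rcases lt_trichotomy s q with hsq | hsq | hsq
          · obtain ⟨w, hwmem, hweq⟩ := intermediate_value_Icc hsq.le hGc.continuousOn
              (show (0:ℝ) ∈ Icc (f s - s) (f q - q) from ⟨by linarith, by linarith⟩)
            exact hfree3 w (lt_of_lt_of_le h1 hwmem.1) (sub_eq_zero.mp hweq)
          · exact absurd (hsq ▸ h) (not_lt.mpr hup.le)
          · obtain ⟨w, hwmem, hweq⟩ := intermediate_value_Icc' hsq.le hGc.continuousOn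
              (show (0:ℝ) ∈ Icc (f s - s) (f q - q) from ⟨by linarith, by linarith⟩)
            exact hfree3 w (lt_of_lt_of_le hγq hwmem.1) (sub_eq_zero.mp hweq)
      set t := (γ + q)/2 with htdef
      have htγ : γ < t := by rw [htdef]; linarith
      have htq : t < q := by rw [htdef]; linarith
      have chain : ∀ i : ℕ, γ < f^[i] t ∧ t ≤ f^[i] t := by
        intro i
        induction i with
        | zero =>
          simp only [Function.iterate_zero_apply]
          exact ⟨htγ, le_refl t⟩
        | succ j ih =>
          have h4 := hgt3 (f^[j] t) ih.1
          rw [Function.iterate_succ_apply']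
          exact ⟨lt_trans ih.1 h4, le_trans ih.2 h4.le⟩
      have hfkt : t ≤ f^[k] t := (chain k).2
      obtain ⟨w, hwmem, hweq⟩ := intermediate_value_Icc' htq.le hFc.continuousOn
        (show (0:ℝ) ∈ Icc (f^[k] q - q) (f^[k] t - t) from ⟨by linarith, by linarith⟩)
      exact hfree3 w (lt_of_lt_of_le htγ hwmem.1) (IHk w (sub_eq_zero.mp hweq))
  · -- no fixed point ≤ q at all
    push_neg at hB
    obtain ⟨w, hwmem, hweq⟩ := intermediate_value_Icc' hmq hFc.continuousOn
      (show (0:ℝ) ∈ Icc (f^[k] q - q) (f^[k] m₀ - m₀) from ⟨by linarith, by linarith⟩)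
    exact hB w hwmem.2 (IHk w (sub_eq_zero.mp hweq))

/-- Mirror version of `key` (for down-movers), via conjugation by negation. -/
private lemma key' (f : ℝ → ℝ) (hf : Continuous f) (k : ℕ)
    (IHk : ∀ y, f^[k] y = y → f y = y)
    (M₀ q : ℝ) (hqM : q ≤ M₀) (hM : f^[k] M₀ < M₀)
    (hqk : f^[k] q ≠ q) (hdown : f q < q) : f^[k] q < q := by
  have hgc : Continuous (fun s : ℝ => -f (-s)) := (hf.comp continuous_neg).neg
  have h := key (fun s : ℝ => -f (-s)) hgc k
    (fun y hy => by
      rw [conj_iter] at hy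
      have h2 : f^[k] (-y) = -y := by linarith
      show -f (-y) = y
      rw [IHk (-y) h2, neg_neg])
    (-M₀) (-q) (neg_le_neg hqM)
    (by rw [conj_iter, neg_neg]; linarith)
    (by rw [conj_iter, neg_neg]; intro hcon; apply hqk; linarith)
    (by show -q < -f (-(-q)); rw [neg_neg]; linarith)
  rw [conj_iter, neg_neg] at h
  linarith

theorem no_period_two_implies_all_fixed (f : ℝ → ℝ) (hf : Continuous f)
    (h2 : ¬ ∃ x : ℝ, f^[2] x = x ∧ f x ≠ x) :
    ∀ x : ℝ, ∀ n : ℕ, 0 < n → f^[n] x = x → f x = x := by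
  push_neg at h2
  suffices H : ∀ n : ℕ, ∀ x : ℝ, 0 < n → f^[n] x = x → f x = x by
    intro x n hn hx; exact H n x hn hx
  intro n
  induction n using Nat.strong_induction_on with
  | _ n IH =>
  intro x hn hx
  rcases Nat.lt_or_ge n 3 with h3 | h3
  · interval_cases n
    · simpa using hx
    · exact h2 x hx
  · by_cases hmin : ∀ m : ℕ, 0 < m → m < n → f^[m] x ≠ x
    case neg =>
      push_neg at hmin
      obtain ⟨m, hm0, hmn, hmx⟩ := hmin
      exact IH m hmn x hm0 hmx
    case pos =>
    by_contra hne
    have hnpos : 0 < n := hn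
    -- period-n reduction of iterates
    have hmod : ∀ a : ℕ, f^[a] x = f^[a % n] x := by
      intro a
      conv_lhs => rw [← Nat.mod_add_div a n]
      have h1 : f^[n * (a / n)] x = x := by
        rw [Function.iterate_mul]
        exact Function.iterate_fixed hx (a / n)
      rw [Function.iterate_add_apply, h1]
    -- no orbit point returns in fewer than n steps
    have hcomm : ∀ (a b : ℕ) (z : ℝ), f^[a] (f^[b] z) = f^[b] (f^[a] z) := by
      intro a b z
      rw [← Function.iterate_add_apply, ← Function.iterate_add_apply, Nat.add_comm a b]
    have hnoret : ∀ (i k : ℕ), i < n → 0 < k → k < n → f^[k] (f^[i] x) ≠ f^[i] x := by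
      intro i k hin hk0 hkn heq
      apply hmin k hk0 hkn
      have hji : f^[n - i] (f^[i] x) = x := by
        rw [← Function.iterate_add_apply, Nat.sub_add_cancel hin.le, hx]
      calc f^[k] x = f^[k] (f^[n-i] (f^[i] x)) := by rw [hji]
      _ = f^[n-i] (f^[k] (f^[i] x)) := hcomm k (n-i) (f^[i] x)
      _ = f^[n-i] (f^[i] x) := by rw [heq]
      _ = x := hji
    -- any orbit point reaches any other orbit point in 1..n-1 steps
    have hrep : ∀ i j : ℕ, i < n → j < n → i ≠ j →
        ∃ k : ℕ, 0 < k ∧ k < n ∧ f^[k] (f^[i] x) = f^[j] x := by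
      intro i j hin hjn hij
      refine ⟨(n + j - i) % n, ?_, Nat.mod_lt _ (by omega), ?_⟩
      · rcases Nat.eq_zero_or_pos ((n + j - i) % n) with h0 | h0
        · exfalso
          obtain ⟨s, hs⟩ := Nat.dvd_of_mod_eq_zero h0
          have hs1 : s ≠ 0 := by rintro rfl; omega
          have hs2 : s ≠ 1 := by rintro rfl; omega
          have hs3 : 2 ≤ s := by omega
          have hs4 : n * 2 ≤ n * s := Nat.mul_le_mul_left n hs3
          omega
        · exact h0
      · rw [← Function.iterate_add_apply, hmod ((n + j - i) % n + i)]
        congr 1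
        have h2 : n + j - i + i = n + j := by omega
        rw [Nat.mod_add_mod, h2, Nat.add_mod_left, Nat.mod_eq_of_lt hjn]
    -- the orbit as a finite set
    set O : Finset ℝ := (Finset.range n).image (fun i => f^[i] x) with hO
    have hxO : x ∈ O := by
      rw [hO]
      exact Finset.mem_image.mpr ⟨0, Finset.mem_range.mpr (by omega), rfl⟩
    have hOne : O.Nonempty := ⟨x, hxO⟩
    have hmem : ∀ y ∈ O, ∃ i, i < n ∧ f^[i] x = y := by
      intro y hy
      rw [hO] at hy
      obtain ⟨i, hi, hiy⟩ := Finset.mem_image.mp hy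
      exact ⟨i, Finset.mem_range.mp hi, hiy⟩
    have hiter_mem : ∀ (i k : ℕ), f^[k] (f^[i] x) ∈ O := by
      intro i k
      rw [← Function.iterate_add_apply, hmod (k + i), hO]
      exact Finset.mem_image.mpr
        ⟨(k+i) % n, Finset.mem_range.mpr (Nat.mod_lt _ (by omega)), rfl⟩
    set m₀ := O.min' hOne with hm₀def
    set M₀ := O.max' hOne with hM₀def
    obtain ⟨i₀, hi₀n, hi₀⟩ := hmem m₀ (O.min'_mem hOne)
    obtain ⟨i₁, hi₁n, hi₁⟩ := hmem M₀ (O.max'_mem hOne)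
    have hm₀up : ∀ k, 0 < k → k < n → m₀ < f^[k] m₀ := by
      intro k hk0 hkn
      have h1 : f^[k] m₀ ∈ O := by rw [← hi₀]; exact hiter_mem i₀ k
      have h2 : f^[k] m₀ ≠ m₀ := by rw [← hi₀]; exact hnoret i₀ k hi₀n hk0 hkn
      exact lt_of_le_of_ne (O.min'_le _ h1) (Ne.symm h2)
    have hM₀down : ∀ k, 0 < k → k < n → f^[k] M₀ < M₀ := by
      intro k hk0 hkn
      have h1 : f^[k] M₀ ∈ O := by rw [← hi₁]; exact hiter_mem i₁ k
      have h2 : f^[k] M₀ ≠ M₀ := by rw [← hi₁]; exact hnoret i₁ k hi₁n hk0 hkn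
      exact lt_of_le_of_ne (O.le_max' _ h1) h2
    -- up-movers on the orbit are strictly below all other orbit points
    have hupmin : ∀ j, j < n → f^[j] x < f (f^[j] x) →
        ∀ y ∈ O, y ≠ f^[j] x → f^[j] x < y := by
      intro j hjn hup y hy hne'
      obtain ⟨i, hin, hiy⟩ := hmem y hy
      have hij : j ≠ i := fun h => hne' (by rw [← hiy, h])
      obtain ⟨k, hk0, hkn, hkeq⟩ := hrep j i hjn hin hij
      have hres := key f hf k (fun z hz => IH k hkn z hk0 hz) m₀ (f^[j] x)
        (O.min'_le _ (by simpa using hiter_mem j 0))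
        (hm₀up k hk0 hkn) (hnoret j k hjn hk0 hkn) hup
      rw [hkeq, hiy] at hres
      exact hres
    -- down-movers on the orbit are strictly above all other orbit points
    have hdownmax : ∀ j, j < n → f (f^[j] x) < f^[j] x →
        ∀ y ∈ O, y ≠ f^[j] x → y < f^[j] x := by
      intro j hjn hdown y hy hne'
      obtain ⟨i, hin, hiy⟩ := hmem y hy
      have hij : j ≠ i := fun h => hne' (by rw [← hiy, h])
      obtain ⟨k, hk0, hkn, hkeq⟩ := hrep j i hjn hin hij
      have hres := key' f hf k (fun z hz => IH k hkn z hk0 hz) M₀ (f^[j] x)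
        (O.le_max' _ (by simpa using hiter_mem j 0))
        (hM₀down k hk0 hkn) (hnoret j k hjn hk0 hkn) hdown
      rw [hkeq, hiy] at hres
      exact hres
    -- the orbit has n ≥ 3 elements
    have hcard : O.card = n := by
      rw [hO, Finset.card_image_of_injOn, Finset.card_range]
      intro i hi j hj hij
      by_contra hne'
      have hin := Finset.mem_range.mp (Finset.mem_coe.mp hi)
      have hjn := Finset.mem_range.mp (Finset.mem_coe.mp hj)
      obtain ⟨k, hk0, hkn, hkeq⟩ := hrep i j hin hjn hne'
      have hij2 : f^[i] x = f^[j] x := hij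
      rw [hij2] at hkeq
      exact hnoret j k hjn hk0 hkn hkeq
    -- pick a third orbit point, neither min nor max
    have hcard2 : 0 < (O \ {m₀, M₀}).card := by
      have h1 : ({m₀, M₀} : Finset ℝ).card ≤ 2 := by
        have := Finset.card_insert_le m₀ ({M₀} : Finset ℝ)
        simpa using this
      have h2 : O.card ≤ (O \ {m₀, M₀}).card + ({m₀, M₀} : Finset ℝ).card :=
        Finset.card_le_card_sdiff_add_card
      omega
    obtain ⟨y, hy⟩ := Finset.card_pos.mp hcard2
    have hyO : y ∈ O := (Finset.mem_sdiff.mp hy).1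
    have hym : y ≠ m₀ ∧ y ≠ M₀ := by
      have h1 := (Finset.mem_sdiff.mp hy).2
      simp only [Finset.mem_insert, Finset.mem_singleton] at h1
      push_neg at h1
      exact h1
    obtain ⟨j, hjn, hjy⟩ := hmem y hyO
    have hyne : f y ≠ y := by
      rw [← hjy]
      simpa using hnoret j 1 hjn one_pos (by omega)
    rcases lt_or_gt_of_ne hyne with hlt | hgt
    · -- f y < y : y must be the maximum, contradiction
      have h5 := hdownmax j hjn (by rw [hjy]; exact hlt) M₀ (O.max'_mem hOne)
        (by rw [hjy]; exact (hym.2).symm)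
      rw [hjy] at h5
      have h6 : y ≤ M₀ := O.le_max' y hyO
      linarith
    · -- f y > y : y must be the minimum, contradiction
      have h5 := hupmin j hjn (by rw [hjy]; exact hgt) m₀ (O.min'_mem hOne)
        (by rw [hjy]; exact (hym.1).symm)
      rw [hjy] at h5
      have h6 : m₀ ≤ y := O.min'_le y hyO
      linarith
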